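/- arXiv:1305.6649 — 3 statements merged into one kernel-verified Lean document; each statement's English description precedes it below -/
import Mathlib

section
/- Let X̃ be a compactum whose uniformity has the visibility property with respect to a connected graph Γ with vertex set Γ⁰ dense in X̃. Then every infinite geodesic ray γ: ℕ → Γ⁰ of Γ converges to a point of X̃ (i.e., for every entourage v of X̃ there is n₀ such that the set γ([n₀,∞)) is v-small; equivalently the limit lim_{n→∞} γ(n) exists in X̃). -/
open Filter Topology Set

namespace Paper


/-- A pair of vertices `(a, b)` is `u_e`-small if some geodesic of `Γ` joining `a` and `b`
does not contain the edge `e`. -/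
def USmallPair {V : Type*} (Γ : SimpleGraph V) (e : Sym2 V) (a b : V) : Prop :=
  ∃ w : Γ.Walk a b, w.length = Γ.dist a b ∧ e ∉ w.edges

/-- The (unique compatible) uniformity of the compactum `X` has the visibility property with
respect to the graph `Γ` on the vertex set `V ⊆ X`: for every entourage `u` there is a finite
set `F` of edges such that every pair of vertices which is `u_e`-small for all `e ∈ F`
is `u`-small. -/
def HasVisibility {X : Type*} [UniformSpace X] (V : Set X) (Γ : SimpleGraph V) : Prop :=
  ∀ u ∈ uniformity X, ∃ F : Finset (Sym2 V),
    ∀ a b : V, (∀ e ∈ F, USmallPair Γ e a b) → ((a : X), (b : X)) ∈ u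

/-- An infinite geodesic ray in the graph `Γ`. -/
def IsGeodesicRay {V : Type*} (Γ : SimpleGraph V) (γ : ℕ → V) : Prop :=
  (∀ n : ℕ, Γ.Adj (γ n) (γ (n + 1))) ∧
  ∀ m n : ℕ, m ≤ n → Γ.dist (γ m) (γ n) = n - m

/-- An eventual geodesic: a map `γ : ℤ → V` whose consecutive distinct values are adjacent,
whose set of "moving" moments is an interval of `ℤ` (so each maximal stop is infinite),
and which is geodesic outside its stops. Constant maps are eventual geodesics. -/
def IsEventualGeodesic {V : Type*} (Γ : SimpleGraph V) (γ : ℤ → V) : Prop :=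
  (∀ k : ℤ, γ k ≠ γ (k + 1) → Γ.Adj (γ k) (γ (k + 1))) ∧
  {k : ℤ | γ k ≠ γ (k + 1)}.OrdConnected ∧
  ∀ s t : ℤ, s ≤ t → (∀ k : ℤ, s ≤ k → k < t → γ k ≠ γ (k + 1)) →
    (Γ.dist (γ s) (γ t) : ℤ) = t - s

/-- The set of eventual geodesics `EG(Γ)` regarded as a subset of the product space `X^ℤ`. -/
def EGImage {X : Type*} [UniformSpace X] (V : Set X) (Γ : SimpleGraph V) : Set (ℤ → X) :=
  {f | ∃ γ : ℤ → V, IsEventualGeodesic Γ γ ∧ f = fun t => (γ t : X)}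


/-! A geodesic ray meets each edge at most once, so a finite set `F` of edges is crossed only by
an initial segment of the ray; beyond that segment every pair of ray vertices is joined by a
subsegment of the ray, a geodesic avoiding `F`. Visibility then makes the tail of the ray
`u`-small, i.e. the ray is Cauchy, and it converges because a compactum is complete. -/

theorem USmallPair.symm {V : Type*} {Γ : SimpleGraph V} {e : Sym2 V} {a b : V}
    (h : USmallPair Γ e a b) : USmallPair Γ e b a := by
  obtain ⟨w, hlen, he⟩ := h
  exact ⟨w.reverse, by rw [w.length_reverse, hlen, Γ.dist_comm], by rwa [w.edges_reverse,
    List.mem_reverse]⟩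

theorem HasVisibility.tendsto_uniformity {X ι : Type*} [UniformSpace X] {V : Set X}
    {Γ : SimpleGraph V} (hvis : HasVisibility V Γ) {l : Filter ι} {f g : ι → V}
    (h : ∀ e, ∀ᶠ i in l, USmallPair Γ e (f i) (g i)) :
    Tendsto (fun i => ((f i : X), (g i : X))) l (uniformity X) := fun u hu => by
  obtain ⟨F, hF⟩ := hvis u hu
  exact (F.eventually_all.2 fun e _ => h e).mono fun i hi => hF _ _ hi

section Walk

variable {V : Type*} {Γ : SimpleGraph V} {f : ℕ → V} (hadj : ∀ n, Γ.Adj (f n) (f (n + 1)))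

def walkAlong (m : ℕ) : ∀ d : ℕ, Γ.Walk (f m) (f (m + d))
  | 0 => .nil
  | d + 1 => (walkAlong m d).concat (hadj (m + d))

theorem walkAlong_length (m d : ℕ) : (walkAlong hadj m d).length = d := by
  induction d with
  | zero => rfl
  | succ d ih => rw [walkAlong, SimpleGraph.Walk.length_concat, ih]

theorem exists_eq_of_mem_edges_walkAlong {m d : ℕ} {e : Sym2 V}
    (he : e ∈ (walkAlong hadj m d).edges) :
    ∃ k, m ≤ k ∧ k < m + d ∧ s(f k, f (k + 1)) = e := by
  induction d with
  | zero => simp [walkAlong] at he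
  | succ d ih =>
    rw [walkAlong, SimpleGraph.Walk.edges_concat, List.concat_eq_append,
      List.mem_append, List.mem_singleton] at he
    rcases he with he | rfl
    · obtain ⟨k, hmk, hkd, rfl⟩ := ih he
      exact ⟨k, hmk, by omega, rfl⟩
    · exact ⟨m + d, by omega, by omega, rfl⟩

end Walk

namespace IsGeodesicRay

variable {V : Type*} {Γ : SimpleGraph V} {γ : ℕ → V} (hγ : IsGeodesicRay Γ γ)
include hγ

theorem injective : Function.Injective γ := by
  intro m n h
  wlog hmn : m ≤ n generalizing m n
  · exact (this h.symm (by omega)).symm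
  have := hγ.2 m n hmn
  rw [h, SimpleGraph.dist_self] at this
  omega

theorem edge_injective : Function.Injective fun k => s(γ k, γ (k + 1)) := by
  intro j k h
  rcases Sym2.eq_iff.1 h with ⟨h, -⟩ | ⟨h₁, h₂⟩
  · exact hγ.injective h
  · have := hγ.injective h₁
    have := hγ.injective h₂
    omega

theorem uSmallPair_of_le {e : Sym2 V} {m n : ℕ} (hmn : m ≤ n)
    (he : ∀ k, m ≤ k → k < n → s(γ k, γ (k + 1)) ≠ e) : USmallPair Γ e (γ m) (γ n) := by
  obtain ⟨d, rfl⟩ := Nat.exists_eq_add_of_le hmn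
  refine ⟨walkAlong hγ.1 m d, ?_, fun hmem => ?_⟩
  · rw [walkAlong_length, hγ.2 m (m + d) hmn]
    omega
  · obtain ⟨k, hmk, hkn, hk⟩ := exists_eq_of_mem_edges_walkAlong hγ.1 hmem
    exact he k hmk hkn hk

theorem eventually_uSmallPair (e : Sym2 V) :
    ∀ᶠ p : ℕ × ℕ in atTop, USmallPair Γ e (γ p.1) (γ p.2) := by
  obtain ⟨N, hN⟩ : ∃ N, ∀ k, s(γ k, γ (k + 1)) = e → k < N := by
    by_cases hk : ∃ k, s(γ k, γ (k + 1)) = e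
    · obtain ⟨k, rfl⟩ := hk
      exact ⟨k + 1, fun j hj => (hγ.edge_injective hj).le.trans_lt k.lt_succ_self⟩
    · exact ⟨0, fun k hk' => absurd ⟨k, hk'⟩ hk⟩
  refine eventually_atTop.2 ⟨(N, N), fun ⟨m, n⟩ ⟨hm, hn⟩ => ?_⟩
  have avoid : ∀ a b, N ≤ a → a ≤ b → USmallPair Γ e (γ a) (γ b) := fun a b ha hab =>
    hγ.uSmallPair_of_le hab fun k hak _ hk => by have := hN k hk; omega
  rcases le_total m n with hmn | hnm
  · exact avoid m n hm hmn
  · exact (avoid n m hn hnm).symm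

end IsGeodesicRay

theorem statement_0_general {X : Type*} [UniformSpace X] [CompactSpace X]
    {V : Set X} (Γ : SimpleGraph V)
    (hvis : HasVisibility V Γ) (γ : ℕ → V) (hγ : IsGeodesicRay Γ γ) :
    ∃ p : X, Tendsto (fun n : ℕ => (γ n : X)) atTop (nhds p) :=
  cauchySeq_tendsto_of_complete <| cauchySeq_iff_tendsto.2 <|
    hvis.tendsto_uniformity hγ.eventually_uSmallPair

/-- Lemma 3.1 / `conv`. Every infinite geodesic ray of `Γ` converges to a
point of `X`. -/
theorem statement_0 {X : Type*} [UniformSpace X] [CompactSpace X] [T2Space X]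
    {V : Set X} (hdense : Dense V) (Γ : SimpleGraph V) (hconn : Γ.Connected)
    (hvis : HasVisibility V Γ) (γ : ℕ → V) (hγ : IsGeodesicRay Γ γ) :
    ∃ p : X, Tendsto (fun n : ℕ => (γ n : X)) atTop (nhds p) :=
  statement_0_general Γ hvis γ hγ

end Paper
end

section
/- Let X̃ be a compactum whose uniformity has the visibility property with respect to a connected graph Γ with vertex set Γ⁰ dense in X̃. Then for every n ≥ 0 and every vertex q ∈ Γ⁰, the ball B_n(q) = {p ∈ Γ⁰ : d_Γ(p,q) ≤ n} of radius n in the graph metric of Γ is a closed subset of X̃. -/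
/-!
Take an ultrafilter on the ball `B_n(q)` converging to a point `x` of the closure, and induct
on `n`. Moving every vertex one step along a geodesic towards `q` gives vertices in `B_{n-1}(q)`
which, by induction, converge to a vertex `w`. If `x ≠ w`, choose a closed entourage `u` missing
`(x, w)`: eventually the pairs (vertex, moved vertex) are adjacent and not `u`-small, so by
visibility the edge between them lies in the finite set `F` attached to `u`. The ultrafilter
then makes both endpoints constant, so `x` is a vertex adjacent to `w`, hence in `B_n(q)`.
-/

open Filter Topology Set

namespace Paper

theorem _root_.SimpleGraph.Reachable.exists_eq_or_adj_dist_le {W : Type*} {G : SimpleGraph W}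
    {p q : W} (h : G.Reachable p q) {n : ℕ} (hpq : G.dist p q ≤ n + 1) :
    ∃ p', G.dist p' q ≤ n ∧ (p = p' ∨ G.Adj p p') := by
  obtain ⟨w, hw⟩ := h.exists_walk_length_eq_dist
  cases w with
  | nil => exact ⟨p, by simp, Or.inl rfl⟩
  | cons hadj w' =>
    rw [SimpleGraph.Walk.length_cons] at hw
    exact ⟨_, (SimpleGraph.dist_le w').trans (by omega), Or.inr hadj⟩

theorem _root_.Ultrafilter.exists_eventually_eq_of_finite {ι α : Type*} {ℱ : Ultrafilter ι}
    {f : ι → α} {s : Set α} (hs : s.Finite) (hf : ∀ᶠ i in ℱ, f i ∈ s) :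
    ∃ a ∈ s, ∀ᶠ i in ℱ, f i = a := by
  obtain ⟨a, ha, hpure⟩ := (ℱ.map f).eq_pure_of_finite_mem hs hf
  exact ⟨a, ha, show {a} ∈ ℱ.map f by rw [hpure]; exact Filter.mem_pure.mpr rfl⟩

theorem _root_.mem_closure_image_iff_ultrafilter {α X : Type*} [TopologicalSpace X] {φ : α → X}
    {s : Set α} {x : X} :
    x ∈ closure (φ '' s) ↔ ∃ ℱ : Ultrafilter α, s ∈ ℱ ∧ Tendsto φ ℱ (𝓝 x) := by
  rw [mem_closure_iff_clusterPt, ← map_principal, ← MapClusterPt, mapClusterPt_iff_ultrafilter]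
  simp only [le_principal_iff, Ultrafilter.mem_coe]

theorem _root_.exists_isClosed_mem_uniformity_notMem {X : Type*} [UniformSpace X] [T0Space X]
    {x y : X} (h : x ≠ y) : ∃ u ∈ uniformity X, IsClosed u ∧ (x, y) ∉ u := by
  obtain ⟨u, hu, hxy⟩ : ∃ u ∈ uniformity X, (x, y) ∉ u := by
    by_contra! hall
    exact h (eq_of_uniformity fun hu => hall _ hu)
  obtain ⟨u', ⟨hu', hclosed⟩, hsub⟩ := uniformity_hasBasis_closed.mem_iff.mp hu
  exact ⟨u', hu', hclosed, fun h' => hxy (hsub h')⟩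

theorem USmallPair.of_adj {W : Type*} {Γ : SimpleGraph W} {e : Sym2 W} {a b : W}
    (hab : Γ.Adj a b) (he : e ≠ s(a, b)) : USmallPair Γ e a b :=
  ⟨hab.toWalk, (SimpleGraph.dist_eq_one_iff_adj.mpr hab).symm, by simpa [eq_comm] using he⟩

section Visibility

variable {X : Type*} [UniformSpace X] {V : Set X} {Γ : SimpleGraph V} {ι : Type*}
  {ℱ : Ultrafilter ι}

/-- Edges outside `F` join `u`-small pairs, so pairs of neighbours that stay `u`-far apart use
one of the finitely many edges of `F`. -/
theorem HasVisibility.exists_eq_or_adj_of_tendsto [T2Space X] (hvis : HasVisibility V Γ)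
    {f g : ι → V} (hfg : ∀ᶠ i in ℱ, f i = g i ∨ Γ.Adj (f i) (g i)) {x : X} {w : V}
    (hf : Tendsto (fun i => (f i : X)) ℱ (𝓝 x))
    (hg : Tendsto (fun i => (g i : X)) ℱ (𝓝 (w : X))) :
    ∃ v : V, (v : X) = x ∧ (v = w ∨ Γ.Adj v w) := by
  classical
  rcases eq_or_ne x w with rfl | hxw
  · exact ⟨w, rfl, Or.inl rfl⟩
  obtain ⟨u, hu, hclosed, hxwu⟩ := exists_isClosed_mem_uniformity_notMem hxw
  obtain ⟨F, hF⟩ := hvis u hu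
  have hfar : ∀ᶠ i in ℱ, ((f i : X), (g i : X)) ∉ u :=
    (hf.prodMk_nhds hg) (hclosed.isOpen_compl.mem_nhds hxwu)
  have hedge : ∀ᶠ i in ℱ, Γ.Adj (f i) (g i) ∧ s(f i, g i) ∈ F := by
    filter_upwards [hfg, hfar] with i hstep hi
    have hadj : Γ.Adj (f i) (g i) :=
      hstep.resolve_left fun h => hi (h ▸ refl_mem_uniformity hu)
    refine ⟨hadj, by_contra fun hnot => hi (hF _ _ fun e he => USmallPair.of_adj hadj ?_)⟩
    rintro rfl
    exact hnot he
  set T : Finset V := F.biUnion Sym2.toFinset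
  have hT : ∀ᶠ i in ℱ, f i ∈ T ∧ g i ∈ T := hedge.mono fun i h => by
    simp only [T, Finset.mem_biUnion, Sym2.mem_toFinset]
    exact ⟨⟨_, h.2, Sym2.mem_mk_left _ _⟩, ⟨_, h.2, Sym2.mem_mk_right _ _⟩⟩
  obtain ⟨a, -, ha⟩ :=
    Ultrafilter.exists_eventually_eq_of_finite T.finite_toSet (hT.mono fun i h => h.1)
  obtain ⟨b, -, hb⟩ :=
    Ultrafilter.exists_eventually_eq_of_finite T.finite_toSet (hT.mono fun i h => h.2)
  have hax : (a : X) = x :=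
    tendsto_nhds_unique (tendsto_nhds_of_eventually_eq (ha.mono fun i h => congrArg _ h)) hf
  have hbw : b = w := Subtype.coe_injective <|
    tendsto_nhds_unique (tendsto_nhds_of_eventually_eq (hb.mono fun i h => congrArg _ h)) hg
  obtain ⟨i, hi, hai, hbi⟩ := (hedge.and (ha.and hb)).exists
  refine ⟨a, hax, Or.inr ?_⟩
  rw [← hbw, ← hai, ← hbi]
  exact hi.1

theorem HasVisibility.exists_dist_le_of_tendsto [CompactSpace X] [T2Space X]
    (hvis : HasVisibility V Γ) (hconn : Γ.Connected) (q : V) (n : ℕ) {f : ι → V}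
    (hf : ∀ᶠ i in ℱ, Γ.dist (f i) q ≤ n) {x : X}
    (hx : Tendsto (fun i => (f i : X)) ℱ (𝓝 x)) :
    ∃ v : V, Γ.dist v q ≤ n ∧ (v : X) = x := by
  induction n generalizing f x with
  | zero =>
    have hq : ∀ᶠ i in ℱ, f i = q :=
      hf.mono fun i h => hconn.dist_eq_zero_iff.mp (Nat.le_zero.mp h)
    exact ⟨q, by simp,
      tendsto_nhds_unique (tendsto_nhds_of_eventually_eq (hq.mono fun i h => congrArg _ h)) hx⟩
  | succ n ih =>
    have hstep (i : ι) : ∃ p, Γ.dist (f i) q ≤ n + 1 →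
        Γ.dist p q ≤ n ∧ (f i = p ∨ Γ.Adj (f i) p) :=
      if h : Γ.dist (f i) q ≤ n + 1 then
        ((hconn (f i) q).exists_eq_or_adj_dist_le h).imp fun _ hp _ => hp
      else ⟨f i, fun h' => absurd h' h⟩
    choose g hg using hstep
    obtain ⟨y, -, hy⟩ :=
      isCompact_univ.ultrafilter_le_nhds (ℱ.map fun i => (g i : X)) (by simp)
    obtain ⟨w, hw, rfl⟩ := ih (hf.mono fun i h => (hg i h).1) hy
    obtain ⟨v, rfl, hvw⟩ :=
      hvis.exists_eq_or_adj_of_tendsto (hf.mono fun i h => (hg i h).2) hx hy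
    refine ⟨v, ?_, rfl⟩
    rcases hvw with rfl | hadj
    · omega
    · have := SimpleGraph.dist_eq_one_iff_adj.mpr hadj
      have := hconn.dist_triangle (u := v) (v := w) (w := q)
      omega

end Visibility

theorem statement_2_general {X : Type*} [UniformSpace X] [CompactSpace X] [T2Space X]
    {V : Set X} (Γ : SimpleGraph V) (hconn : Γ.Connected)
    (hvis : HasVisibility V Γ) (n : ℕ) (q : V) :
    IsClosed ((fun v : V => (v : X)) '' {p : V | Γ.dist p q ≤ n}) := by
  refine isClosed_of_closure_subset fun x hx => ?_
  obtain ⟨ℱ, hball, hℱ⟩ := mem_closure_image_iff_ultrafilter.mp hx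
  obtain ⟨v, hv, rfl⟩ := hvis.exists_dist_le_of_tendsto hconn q n hball hℱ
  exact ⟨v, hv, rfl⟩

/-- Corollary `clbal`. Every ball of the graph metric of `Γ` is closed
in `X`. -/
theorem statement_2 {X : Type*} [UniformSpace X] [CompactSpace X] [T2Space X]
    {V : Set X} (hdense : Dense V) (Γ : SimpleGraph V) (hconn : Γ.Connected)
    (hvis : HasVisibility V Γ) (n : ℕ) (q : V) :
    IsClosed ((fun v : V => (v : X)) '' {p : V | Γ.dist p q ≤ n}) :=
  statement_2_general Γ hconn hvis n q

end Paper
end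

section
/- Suppose a group G acts 3-discontinuously and 2-cocompactly on compacta X₁ and X₂, and let Z be a pullback space for these actions, with continuous G-equivariant maps π₁: Z → X₁ and π₂: Z → X₂. Then the induced diagonal action of G on the compact subspace T = {(π₁(z), π₂(z)) : z ∈ Z} of X₁ × X₂ is 3-discontinuous and 2-cocompact. -/
open Filter Topology Set

namespace Paper


/-- The space of pairs of distinct points of `S`. -/
def theta2 (X : Type*) (S : Set X) : Set (X × X) :=
  {p | p.1 ∈ S ∧ p.2 ∈ S ∧ p.1 ≠ p.2}

/-- The space of triples of pairwise distinct points of `S`. -/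
def theta3 (X : Type*) (S : Set X) : Set (X × X × X) :=
  {p | p.1 ∈ S ∧ p.2.1 ∈ S ∧ p.2.2 ∈ S ∧ p.1 ≠ p.2.1 ∧ p.1 ≠ p.2.2 ∧ p.2.1 ≠ p.2.2}

/-- The action of `G` is 3-discontinuous on the invariant subset `S ⊆ X`: the induced action
on the space of triples of pairwise distinct points of `S` is properly discontinuous. -/
def ThreeDiscontinuousOn (G X : Type*) [Group G] [TopologicalSpace X] [MulAction G X]
    (S : Set X) : Prop :=
  ∀ K L : Set (X × X × X), K ⊆ theta3 X S → L ⊆ theta3 X S → IsCompact K → IsCompact L →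
    {g : G | ∃ p ∈ K, (g • p.1, g • p.2.1, g • p.2.2) ∈ L}.Finite

/-- The action of `G` is 2-cocompact on the invariant subset `S ⊆ X`: there is a compact
fundamental set for the induced action on the space of distinct pairs of `S`. -/
def TwoCocompactOn (G X : Type*) [Group G] [TopologicalSpace X] [MulAction G X]
    (S : Set X) : Prop :=
  ∃ K : Set (X × X), K ⊆ theta2 X S ∧ IsCompact K ∧
    ∀ p ∈ theta2 X S, ∃ g : G, (g • p.1, g • p.2) ∈ K

/-- The limit set of a subgroup `H ≤ G` for the action of `G` on `X`: the set of accumulation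
points of an `H`-orbit in `X`. -/
def limitSet (G X : Type*) [Group G] [TopologicalSpace X] [MulAction G X]
    (H : Subgroup G) : Set X :=
  {y | ∃ x : X, MapClusterPt y (Filter.cofinite : Filter H) fun h : H => (h : G) • x}

/-- The action of `G` on `X` is minimal: the limit set is all of `X`. -/
def MinimalAction (G X : Type*) [Group G] [TopologicalSpace X] [MulAction G X] : Prop :=
  limitSet G X ⊤ = Set.univ

/-- The action of `G` on `X` is parabolic: the limit set is a single point. -/
def ParabolicAction (G X : Type*) [Group G] [TopologicalSpace X] [MulAction G X] : Prop :=
  ∃ p : X, limitSet G X ⊤ = {p}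

/-- The subgroup `H ≤ G` acts 2-cocompactly on the subset `Λ ⊆ X`: there is a compact
fundamental set for the `H`-action on the space of distinct pairs of `Λ` (in particular this
holds trivially when `Λ` has at most one point). -/
def SubgroupTwoCocompactOn {G : Type*} (X : Type*) [Group G] [TopologicalSpace X]
    [MulAction G X] (H : Subgroup G) (Λ : Set X) : Prop :=
  ∃ K : Set (X × X), K ⊆ theta2 X Λ ∧ IsCompact K ∧
    ∀ p ∈ theta2 X Λ, ∃ h : H, ((h : G) • p.1, (h : G) • p.2) ∈ K

/-- `p` is a parabolic point: its stabilizer is infinite and `p` is the unique point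
fixed by its stabilizer. -/
def IsParabolicPoint (G : Type*) {X : Type*} [Group G] [MulAction G X] (p : X) : Prop :=
  ((MulAction.stabilizer G p : Set G)).Infinite ∧
    ∀ q : X, (∀ g ∈ MulAction.stabilizer G p, g • q = q) → q = p

/-- The peripheral structure of the action: the set of stabilizers of parabolic points. -/
def peripheralStructure (G X : Type*) [Group G] [MulAction G X] : Set (Subgroup G) :=
  {P | ∃ p : X, IsParabolicPoint G p ∧ P = MulAction.stabilizer G p}

/-- `x` is a conical point for the action of `G` on `X`. -/
def IsConicalPoint (G : Type*) {X : Type*} [Group G] [TopologicalSpace X] [MulAction G X]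
    (x : X) : Prop :=
  ∃ S : Set G, S.Infinite ∧ ∀ y : X, y ≠ x →
    ∀ p ∈ closure {q : X × X | ∃ s ∈ S, q = (s • x, s • y)}, p.1 ≠ p.2

/-- `H ≤ G` is dynamically quasiconvex: for every entourage `u` of `X` the set of cosets
`gH` such that `g(Λ_X H)` is not `u`-small is finite. -/
def DynamicallyQuasiconvex {G : Type*} (X : Type*) [Group G] [UniformSpace X]
    [MulAction G X] (H : Subgroup G) : Prop :=
  ∀ u ∈ uniformity X,
    ((QuotientGroup.mk : G → G ⧸ H) ''
      {g : G | ¬ ∀ x ∈ limitSet G X H, ∀ y ∈ limitSet G X H, (g • x, g • y) ∈ u}).Finite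

/-- An infinite set `S ⊆ G` converges to the cross with repeller `r` and attractor `a`:
for all neighbourhoods `R` of `r` and `A` of `a`, all but finitely many `g ∈ S` satisfy
`g • (X ∖ R) ⊆ A`. -/
def ConvergesToCross (G : Type*) {X : Type*} [Group G] [TopologicalSpace X] [MulAction G X]
    (S : Set G) (r a : X) : Prop :=
  S.Infinite ∧ ∀ R ∈ nhds r, ∀ A ∈ nhds a,
    {g : G | g ∈ S ∧ ¬ ∀ x : X, x ∉ R → g • x ∈ A}.Finite

/-- `a` is an attractive limit point of `S ⊆ G`: some infinite subset of `S` converges to a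
cross with attractor `a`. -/
def IsAttractiveLimitPoint (G : Type*) {X : Type*} [Group G] [TopologicalSpace X]
    [MulAction G X] (S : Set G) (a : X) : Prop :=
  ∃ S₀ ⊆ S, ∃ r : X, ConvergesToCross G S₀ r a

/-- `F` is a closed set of the attractor-sum topology on `X ⊔ G`: its trace on `X` is closed,
its trace on `G` is arbitrary, and it contains every attractive limit point of its trace
on `G`. -/
def AttractorSumClosed (G X : Type*) [Group G] [TopologicalSpace X] [MulAction G X]
    (F : Set (X ⊕ G)) : Prop :=
  IsClosed (Sum.inl ⁻¹' F : Set X) ∧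
    ∀ a : X, IsAttractiveLimitPoint G (Sum.inr ⁻¹' F : Set G) a → Sum.inl a ∈ F

theorem smul_mem_range_of_equivariant {G Y Z : Type*} [SMul G Y] [SMul G Z] {φ : Z → Y}
    (hφ : ∀ (g : G) (z : Z), φ (g • z) = g • φ z) (g : G) {y : Y} (hy : y ∈ range φ) :
    g • y ∈ range φ := by
  obtain ⟨z, rfl⟩ := hy
  exact ⟨g • z, hφ g z⟩

theorem preimage_theta3_subset {Y Z : Type*} {φ : Z → Y} {S : Set Y} {M : Set (Y × Y × Y)}
    (hM : M ⊆ theta3 Y S) : Prod.map φ (Prod.map φ φ) ⁻¹' M ⊆ theta3 Z univ := by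
  intro q hq
  obtain ⟨-, -, -, h₁₂, h₁₃, h₂₃⟩ := hM hq
  exact ⟨trivial, trivial, trivial, fun h => h₁₂ (congrArg φ h), fun h => h₁₃ (congrArg φ h),
    fun h => h₂₃ (congrArg φ h)⟩

/-- Triples of distinct points of the image lift to triples of distinct points of `Z`, and as `Z`
is compact, compact sets of triples pull back to compact sets. -/
theorem ThreeDiscontinuousOn.range_of_equivariant {G Y Z : Type*} [Group G]
    [TopologicalSpace Y] [T2Space Y] [MulAction G Y]
    [TopologicalSpace Z] [CompactSpace Z] [MulAction G Z]
    (hZ : ThreeDiscontinuousOn G Z univ) {φ : Z → Y} (hφc : Continuous φ)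
    (hφ : ∀ (g : G) (z : Z), φ (g • z) = g • φ z) :
    ThreeDiscontinuousOn G Y (range φ) := by
  intro K L hK hL hKc hLc
  set Φ : Z × Z × Z → Y × Y × Y := Prod.map φ (Prod.map φ φ)
  have hΦc : Continuous Φ := hφc.prodMap (hφc.prodMap hφc)
  have hpull : ∀ M : Set (Y × Y × Y), IsCompact M → IsCompact (Φ ⁻¹' M) := fun M hM =>
    (hM.isClosed.preimage hΦc).isCompact
  refine (hZ _ _ (preimage_theta3_subset hK) (preimage_theta3_subset hL) (hpull K hKc)
    (hpull L hLc)).subset ?_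
  rintro g ⟨p, hpK, hpL⟩
  obtain ⟨⟨z₁, hz₁⟩, ⟨z₂, hz₂⟩, ⟨z₃, hz₃⟩, -⟩ := hK hpK
  have hp : Φ (z₁, z₂, z₃) = p := by simp only [Φ, Prod.map, hz₁, hz₂, hz₃]
  refine ⟨(z₁, z₂, z₃), show Φ (z₁, z₂, z₃) ∈ K by rwa [hp], ?_⟩
  simpa only [Set.mem_preimage, Φ, Prod.map, hφ, hz₁, hz₂, hz₃] using hpL

/-- A pair of distinct points of `T` differs in one of the two coordinates, which can then be
moved into the compact fundamental set of that factor. -/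
theorem TwoCocompactOn.prod_of_isCompact {G X₁ X₂ : Type*} [Group G]
    [TopologicalSpace X₁] [T2Space X₁] [MulAction G X₁]
    [TopologicalSpace X₂] [T2Space X₂] [MulAction G X₂]
    (h₁ : TwoCocompactOn G X₁ univ) (h₂ : TwoCocompactOn G X₂ univ) {T : Set (X₁ × X₂)}
    (hT : IsCompact T) (hTinv : ∀ (g : G), ∀ p ∈ T, g • p ∈ T) :
    TwoCocompactOn G (X₁ × X₂) T := by
  obtain ⟨K₁, hK₁, hK₁c, hK₁G⟩ := h₁
  obtain ⟨K₂, hK₂, hK₂c, hK₂G⟩ := h₂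
  set C₁ : Set ((X₁ × X₂) × (X₁ × X₂)) := (T ×ˢ T) ∩ {q | (q.1.1, q.2.1) ∈ K₁}
  set C₂ : Set ((X₁ × X₂) × (X₁ × X₂)) := (T ×ˢ T) ∩ {q | (q.1.2, q.2.2) ∈ K₂}
  have hC₁c : IsCompact C₁ := (hT.prod hT).inter_right <| hK₁c.isClosed.preimage <| by fun_prop
  have hC₂c : IsCompact C₂ := (hT.prod hT).inter_right <| hK₂c.isClosed.preimage <| by fun_prop
  refine ⟨C₁ ∪ C₂, ?_, hC₁c.union hC₂c, ?_⟩
  · rintro q (⟨⟨hq₁, hq₂⟩, hqK⟩ | ⟨⟨hq₁, hq₂⟩, hqK⟩)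
    · exact ⟨hq₁, hq₂, fun h => (hK₁ hqK).2.2 (by rw [h])⟩
    · exact ⟨hq₁, hq₂, fun h => (hK₂ hqK).2.2 (by rw [h])⟩
  · rintro p ⟨hp₁, hp₂, hne⟩
    have hT₂ : ∀ g : G, g • p ∈ T ×ˢ T := fun g => ⟨hTinv g _ hp₁, hTinv g _ hp₂⟩
    by_cases hfst : p.1.1 = p.2.1
    · have hsnd : p.1.2 ≠ p.2.2 := fun h => hne (Prod.ext hfst h)
      obtain ⟨g, hg⟩ := hK₂G (p.1.2, p.2.2) ⟨trivial, trivial, hsnd⟩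
      exact ⟨g, Or.inr ⟨hT₂ g, hg⟩⟩
    · obtain ⟨g, hg⟩ := hK₁G (p.1.1, p.2.1) ⟨trivial, trivial, hfst⟩
      exact ⟨g, Or.inl ⟨hT₂ g, hg⟩⟩

theorem statement_16_general {G X₁ X₂ Z : Type*} [Group G]
    [TopologicalSpace X₁] [T2Space X₁] [MulAction G X₁]
    [TopologicalSpace X₂] [T2Space X₂] [MulAction G X₂]
    [TopologicalSpace Z] [CompactSpace Z] [MulAction G Z]
    (h12 : TwoCocompactOn G X₁ Set.univ)
    (h22 : TwoCocompactOn G X₂ Set.univ)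
    (hZ3 : ThreeDiscontinuousOn G Z Set.univ)
    (π₁ : Z → X₁) (π₂ : Z → X₂) (hπ₁ : Continuous π₁) (hπ₂ : Continuous π₂)
    (he₁ : ∀ (g : G) (z : Z), π₁ (g • z) = g • π₁ z)
    (he₂ : ∀ (g : G) (z : Z), π₂ (g • z) = g • π₂ z) :
    IsCompact {p : X₁ × X₂ | ∃ z : Z, p = (π₁ z, π₂ z)} ∧
    ThreeDiscontinuousOn G (X₁ × X₂) {p : X₁ × X₂ | ∃ z : Z, p = (π₁ z, π₂ z)} ∧
    TwoCocompactOn G (X₁ × X₂) {p : X₁ × X₂ | ∃ z : Z, p = (π₁ z, π₂ z)} := by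
  have hT : {p : X₁ × X₂ | ∃ z : Z, p = (π₁ z, π₂ z)} = range fun z => (π₁ z, π₂ z) := by
    ext p
    exact exists_congr fun z => eq_comm
  have hπ : Continuous fun z => (π₁ z, π₂ z) := hπ₁.prodMk hπ₂
  have he : ∀ (g : G) (z : Z), (π₁ (g • z), π₂ (g • z)) = g • (π₁ z, π₂ z) := fun g z => by
    rw [he₁, he₂, Prod.smul_mk]
  rw [hT]
  exact ⟨isCompact_range hπ, hZ3.range_of_equivariant hπ he,
    h12.prod_of_isCompact h22 (isCompact_range hπ) (smul_mem_range_of_equivariant he)⟩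

/-- Lemma `quotient`. If `G` acts 3-discontinuously and 2-cocompactly on
compacta `X₁` and `X₂` and `Z` is a pullback space with maps `π₁, π₂`, then the diagonal
action of `G` on the compact subspace `T = {(π₁ z, π₂ z)} ⊆ X₁ × X₂` is 3-discontinuous
and 2-cocompact. -/
theorem statement_16 {G X₁ X₂ Z : Type*} [Group G]
    [TopologicalSpace X₁] [CompactSpace X₁] [T2Space X₁] [MulAction G X₁]
    [ContinuousConstSMul G X₁]
    [TopologicalSpace X₂] [CompactSpace X₂] [T2Space X₂] [MulAction G X₂]
    [ContinuousConstSMul G X₂]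
    [TopologicalSpace Z] [CompactSpace Z] [T2Space Z] [MulAction G Z]
    [ContinuousConstSMul G Z]
    (h13 : ThreeDiscontinuousOn G X₁ Set.univ) (h12 : TwoCocompactOn G X₁ Set.univ)
    (h23 : ThreeDiscontinuousOn G X₂ Set.univ) (h22 : TwoCocompactOn G X₂ Set.univ)
    (hZ3 : ThreeDiscontinuousOn G Z Set.univ)
    (π₁ : Z → X₁) (π₂ : Z → X₂) (hπ₁ : Continuous π₁) (hπ₂ : Continuous π₂)
    (he₁ : ∀ (g : G) (z : Z), π₁ (g • z) = g • π₁ z)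
    (he₂ : ∀ (g : G) (z : Z), π₂ (g • z) = g • π₂ z) :
    IsCompact {p : X₁ × X₂ | ∃ z : Z, p = (π₁ z, π₂ z)} ∧
    ThreeDiscontinuousOn G (X₁ × X₂) {p : X₁ × X₂ | ∃ z : Z, p = (π₁ z, π₂ z)} ∧
    TwoCocompactOn G (X₁ × X₂) {p : X₁ × X₂ | ∃ z : Z, p = (π₁ z, π₂ z)} :=
  statement_16_general h12 h22 hZ3 π₁ π₂ hπ₁ hπ₂ he₁ he₂

end Paper
end
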